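/- arXiv:2211.12603 — 3 statements merged into one kernel-verified Lean document; each statement's English description precedes it below -/
import Mathlib

section
/- Let (Λ, Γ) be a CRN whose rules are all of size (2,0), i.e., each rule consumes two species (possibly equal) and produces nothing. Given configurations I ≥ D componentwise, D is reachable from I if and only if the multigraph whose vertex multiset consists of (I − D)(i) copies of each species i, with edges joining every copy of species a to every copy of species b whenever a + b → ∅ is a rule (including edges among copies of the same species a when 2a → ∅ is a rule), has a perfect matching. -/
/-!
Void rules only remove species, so along any run the initial configuration is the current one plus
the sum of the consumption vectors of the rules fired so far. Conversely, if `I - D` is such a sum,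
the rules can be fired in any order: the copies they still have to remove are always present.
A perfect matching of the multigraph on `I - D` is exactly such a decomposition into rule pairs.
-/

abbrev Config (Λ : Type*) := Λ → ℕ
abbrev Rule (Λ : Type*) := (Λ → ℕ) × (Λ → ℕ)

def Applicable {Λ : Type*} (R : Rule Λ) (C : Config Λ) : Prop := ∀ i, R.1 i ≤ C i

def applyRule {Λ : Type*} (R : Rule Λ) (C : Config Λ) : Config Λ :=
  fun i => C i + R.2 i - R.1 i

def Step {Λ : Type*} (Γ : Set (Rule Λ)) (C C' : Config Λ) : Prop :=
  ∃ R ∈ Γ, Applicable R C ∧ C' = applyRule R C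

def Reachable {Λ : Type*} (Γ : Set (Rule Λ)) : Config Λ → Config Λ → Prop :=
  Relation.ReflTransGen (Step Γ)

section VoidRules

variable {Λ ι : Type*}

def voidRules (E : Finset ι) (r : ι → Config Λ) : Set (Rule Λ) :=
  {R | ∃ p ∈ E, R = (r p, fun _ => 0)}

theorem step_voidRules_iff {E : Finset ι} {r : ι → Config Λ} {C C' : Config Λ} :
    Step (voidRules E r) C C' ↔ ∃ q ∈ E, r q ≤ C ∧ C' = C - r q := by
  constructor
  · rintro ⟨_, ⟨q, hq, rfl⟩, happ, rfl⟩
    exact ⟨q, hq, happ, funext fun i => by simp [applyRule]⟩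
  · rintro ⟨q, hq, hle, rfl⟩
    exact ⟨_, ⟨q, hq, rfl⟩, hle, funext fun i => by simp [applyRule]⟩

theorem Reachable.exists_eq_add_sum {E : Finset ι} {r : ι → Config Λ} {I D : Config Λ}
    (h : Reachable (voidRules E r) I D) :
    ∃ f : ι → ℕ, (∀ p ∉ E, f p = 0) ∧ I = D + ∑ p ∈ E, f p • r p := by
  classical
  induction h with
  | refl => exact ⟨0, fun _ _ => rfl, by simp⟩
  | @tail C C' _ hstep ih =>
    obtain ⟨f, hfE, hI⟩ := ih
    obtain ⟨q, hq, hle, rfl⟩ := step_voidRules_iff.mp hstep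
    refine ⟨f + Pi.single q 1, fun p hp => ?_, ?_⟩
    · simp [hfE p hp, show p ≠ q from fun h => hp (h ▸ hq)]
    · have hsingle : ∑ p ∈ E, (Pi.single q 1 : ι → ℕ) p • r p = r q := by
        simp [Pi.single_apply, ite_smul, hq]
      simp only [hI, Pi.add_apply, add_smul, Finset.sum_add_distrib, hsingle]
      rw [← add_assoc, add_right_comm, tsub_add_cancel_of_le hle]

theorem reachable_add_nsmul {E : Finset ι} {r : ι → Config Λ} {q : ι} (hq : q ∈ E)
    (C : Config Λ) (n : ℕ) : Reachable (voidRules E r) (C + n • r q) C := by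
  induction n with
  | zero =>
    rw [zero_smul, add_zero]
    exact Relation.ReflTransGen.refl
  | succ n ih =>
    refine Relation.ReflTransGen.head (step_voidRules_iff.mpr ⟨q, hq, ?_, ?_⟩) ih
    · rw [succ_nsmul, ← add_assoc]
      exact le_add_self
    · rw [succ_nsmul, ← add_assoc, add_tsub_cancel_right]

theorem reachable_add_sum {E s : Finset ι} {r : ι → Config Λ} (hs : s ⊆ E) (f : ι → ℕ)
    (C : Config Λ) : Reachable (voidRules E r) (C + ∑ p ∈ s, f p • r p) C := by
  classical
  induction s using Finset.induction_on with
  | empty =>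
    rw [Finset.sum_empty, add_zero]
    exact Relation.ReflTransGen.refl
  | @insert a s ha ih =>
    rw [Finset.sum_insert ha, add_left_comm, add_comm]
    exact (reachable_add_nsmul (hs (Finset.mem_insert_self a s)) _ _).trans
      (ih ((Finset.subset_insert a s).trans hs))

theorem reachable_voidRules_iff {E : Finset ι} {r : ι → Config Λ} {I D : Config Λ} :
    Reachable (voidRules E r) I D ↔
      ∃ f : ι → ℕ, (∀ p ∉ E, f p = 0) ∧ I = D + ∑ p ∈ E, f p • r p := by
  refine ⟨Reachable.exists_eq_add_sum, ?_⟩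
  rintro ⟨f, -, rfl⟩
  exact reachable_add_sum subset_rfl f D

end VoidRules

theorem stmt10_general {Λ : Type*} [DecidableEq Λ] (E : Finset (Λ × Λ)) (I D : Config Λ) :
    Reachable {R : Rule Λ | ∃ p ∈ E,
        R = ((Pi.single p.1 1 + Pi.single p.2 1 : Λ → ℕ), fun _ => 0)} I D ↔
      ∃ f : Λ × Λ → ℕ, (∀ p ∉ E, f p = 0) ∧
        ∀ i, I i = D i + ∑ p ∈ E, f p * (Pi.single p.1 1 + Pi.single p.2 1 : Λ → ℕ) i := by
  refine (reachable_voidRules_iff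
    (r := fun p : Λ × Λ => Pi.single p.1 1 + Pi.single p.2 1)).trans ?_
  simp only [funext_iff, Pi.add_apply, Finset.sum_apply, Pi.smul_apply, smul_eq_mul]

/-- for a CRN whose rules are the size-(2,0) void rules `a + b → ∅` for
`(a,b) ∈ E` (possibly `a = b`, giving `2a → ∅`), and configurations `I ≥ D`, `D` is
reachable from `I` iff the multigraph on `(I-D)(i)` copies of each species `i` (with
edges between copies of `a` and `b` for each rule) has a perfect matching; equivalently,
iff there is a multiset of rule applications — `f p` applications of the rule for each
pair `p ∈ E`, each application matching up and removing its two species copies — whose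
total consumption is exactly `I - D`. -/
theorem stmt10 {Λ : Type*} [DecidableEq Λ] (E : Finset (Λ × Λ)) (I D : Config Λ)
    (hID : ∀ i, D i ≤ I i) :
    Reachable {R : Rule Λ | ∃ p ∈ E,
        R = ((Pi.single p.1 1 + Pi.single p.2 1 : Λ → ℕ), fun _ => 0)} I D ↔
      ∃ f : Λ × Λ → ℕ, (∀ p ∉ E, f p = 0) ∧
        ∀ i, I i = D i + ∑ p ∈ E, f p * (Pi.single p.1 1 + Pi.single p.2 1 : Λ → ℕ) i :=
  stmt10_general E I D
end

section
/- In a CRN where every rule is a void rule (products vector componentwise ≤ reactants vector, with application vector having no positive entries), configuration D is reachable from I if and only if there exist nonnegative integers f(R) for each rule R such that Σ_R f(R)·(R_r − R_p) = I − D. In particular, the order of applications is irrelevant: any total count assignment with the correct sum is realizable by some ordering. -/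
open Finset

section VoidRules

variable {Λ : Type*}

lemma applyRule_add_fst {R : Rule Λ} (hR : R.2 = 0) (C : Config Λ) :
    applyRule R (C + R.1) = C := by
  funext i
  simp [applyRule, hR]

lemma Applicable.eq_applyRule_add_fst {R : Rule Λ} {C : Config Λ} (hR : R.2 = 0)
    (h : Applicable R C) : C = applyRule R C + R.1 := by
  funext i
  have := h i
  simp only [applyRule, hR, Pi.add_apply, Pi.zero_apply, add_zero]
  omega

lemma step_add_fst {Γ : Set (Rule Λ)} {R : Rule Λ} (hRΓ : R ∈ Γ) (hR : R.2 = 0)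
    (C : Config Λ) : Step Γ (C + R.1) C :=
  ⟨R, hRΓ, fun _ => le_add_self, (applyRule_add_fst hR C).symm⟩

lemma Step.exists_eq_add_fst {Γ : Set (Rule Λ)} (hvoid : ∀ R ∈ Γ, R.2 = 0)
    {C C' : Config Λ} (h : Step Γ C C') : ∃ R ∈ Γ, C = C' + R.1 := by
  obtain ⟨R, hRΓ, happ, rfl⟩ := h
  exact ⟨R, hRΓ, happ.eq_applyRule_add_fst (hvoid R hRΓ)⟩

lemma reachable_add_nsmul_fst {Γ : Set (Rule Λ)} {R : Rule Λ} (hRΓ : R ∈ Γ) (hR : R.2 = 0)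
    (C : Config Λ) (n : ℕ) : Reachable Γ (C + n • R.1) C := by
  induction n with
  | zero => simpa using .refl
  | succ n ih =>
    rw [succ_nsmul, ← add_assoc]
    exact .head (step_add_fst hRΓ hR _) ih

lemma reachable_add_sum_nsmul_fst {Γ : Set (Rule Λ)} (hvoid : ∀ R ∈ Γ, R.2 = 0)
    (s : Finset (Rule Λ)) (hs : ↑s ⊆ Γ) (f : Rule Λ → ℕ) (C : Config Λ) :
    Reachable Γ (C + ∑ R ∈ s, f R • R.1) C := by
  classical
  induction s using Finset.induction_on with
  | empty => simpa using .refl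
  | insert R s hRs ih =>
    have hRΓ : R ∈ Γ := hs (mem_insert_self R s)
    rw [sum_insert hRs, add_left_comm, add_comm]
    exact (reachable_add_nsmul_fst hRΓ (hvoid R hRΓ) _ _).trans
      (ih ((coe_subset.2 (subset_insert R s)).trans hs))

lemma Reachable.exists_eq_add_sum_nsmul_fst {Γ : Finset (Rule Λ)}
    (hvoid : ∀ R ∈ Γ, R.2 = 0) {I D : Config Λ} (h : Reachable (↑Γ : Set (Rule Λ)) I D) :
    ∃ f : Rule Λ → ℕ, I = D + ∑ R ∈ Γ, f R • R.1 := by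
  classical
  induction h using Relation.ReflTransGen.head_induction_on with
  | refl => exact ⟨0, by simp⟩
  | head hstep _ ih =>
    obtain ⟨f, hf⟩ := ih
    obtain ⟨R, hRΓ, rfl⟩ := hstep.exists_eq_add_fst hvoid
    refine ⟨f + Pi.single R 1, ?_⟩
    simp [hf, add_smul, sum_add_distrib, Pi.single_apply, ite_smul, mem_coe.1 hRΓ, add_assoc]

end VoidRules

/-- in a CRN where every rule is a pure void rule (`R_p = 0`, size (k,0)),
`D` is reachable from `I` iff there exist nonnegative integers `f(R)` for each rule with
`Σ_R f(R)·(R_r - R_p) = I - D` (here `Σ_R f(R)·R_r = I - D`); the order of application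
is irrelevant. -/
theorem stmt13 {Λ : Type*} (Γ : Finset (Rule Λ))
    (hvoid : ∀ R ∈ Γ, R.2 = fun _ => 0)
    (I D : Config Λ) :
    Reachable (↑Γ : Set (Rule Λ)) I D ↔
      ∃ f : Rule Λ → ℕ, ∀ i, I i = D i + ∑ R ∈ Γ, f R * R.1 i := by
  have hvec (f : Rule Λ → ℕ) :
      I = D + ∑ R ∈ Γ, f R • R.1 ↔ ∀ i, I i = D i + ∑ R ∈ Γ, f R * R.1 i := by
    simp [funext_iff, Finset.sum_apply]
  simp_rw [← hvec]
  refine ⟨Reachable.exists_eq_add_sum_nsmul_fst hvoid, ?_⟩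
  rintro ⟨f, rfl⟩
  exact reachable_add_sum_nsmul_fst hvoid Γ subset_rfl f D
end

section
/- In the Hamiltonian-path CRN construction (species X, X^v, X*_i; rules A*_i + B → A^v + B*_{i+1}), every configuration reachable from the initial configuration contains exactly one copy of exactly one starred species X*_i, and the index i equals the number of rule applications performed; moreover each species X^v, once present, has its count never decreased. -/
/-- A sequence of exactly `n` rule applications from `C` to `C'`. -/
inductive StepsN {Λ : Type*} (Γ : Set (Rule Λ)) : ℕ → Config Λ → Config Λ → Prop
  | refl (C : Config Λ) : StepsN Γ 0 C C
  | tail {n : ℕ} {C M C' : Config Λ} :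
      StepsN Γ n C M → Step Γ M C' → StepsN Γ (n + 1) C C'

/-- Species of the Hamiltonian-path construction: plain `X`, visited `X^v`,
and starred `X*_i`. -/
abbrev Sp (V : Type*) := V ⊕ V ⊕ (V × ℕ)

def plain {V : Type*} (X : V) : Sp V := Sum.inl X
def vis {V : Type*} (X : V) : Sp V := Sum.inr (Sum.inl X)
def star {V : Type*} (X : V) (i : ℕ) : Sp V := Sum.inr (Sum.inr (X, i))

/-- Rules `A*_i + B → A^v + B*_{i+1}` for edges `(A,B) ∈ E` and `0 ≤ i < |V|`. -/
def hamRules {V : Type*} [Fintype V] [DecidableEq V] (E : V → V → Prop) :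
    Set (Rule (Sp V)) :=
  {R | ∃ A B i, E A B ∧ i < Fintype.card V ∧
    R = ((Pi.single (star A i) 1 + Pi.single (plain B) 1 : Sp V → ℕ),
         (Pi.single (vis A) 1 + Pi.single (star B (i + 1)) 1 : Sp V → ℕ))}

/-- Initial configuration: one copy of `s*_0` and one copy of each plain `X ≠ s`. -/
def hamI {V : Type*} [DecidableEq V] (s : V) : Config (Sp V)
  | Sum.inl X => if X = s then 0 else 1
  | Sum.inr (Sum.inl _) => 0
  | Sum.inr (Sum.inr p) => if p = (s, 0) then 1 else 0

theorem le_applyRule_of_fst_eq_zero {Λ : Type*} {R : Rule Λ} {k : Λ} (h : R.1 k = 0)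
    (C : Config Λ) : C k ≤ applyRule R C k := by
  simp only [applyRule, h]
  omega

section HamRule

variable {V : Type*} [DecidableEq V]

def hamRule (A B : V) (i : ℕ) : Rule (Sp V) :=
  ((Pi.single (star A i) 1 + Pi.single (plain B) 1 : Sp V → ℕ),
   (Pi.single (vis A) 1 + Pi.single (star B (i + 1)) 1 : Sp V → ℕ))

theorem mem_hamRules [Fintype V] {E : V → V → Prop} {R : Rule (Sp V)} :
    R ∈ hamRules E ↔ ∃ A B i, E A B ∧ i < Fintype.card V ∧ R = hamRule A B i :=
  Iff.rfl

theorem hamRule_fst_vis (A B X : V) (i : ℕ) : (hamRule A B i).1 (vis X) = 0 := by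
  simp [hamRule, _root_.star, plain, vis]

theorem hamRule_fst_star (A B Y : V) (i j : ℕ) :
    (hamRule A B i).1 (star Y j) = if Y = A ∧ j = i then 1 else 0 := by
  simp [hamRule, _root_.star, plain, Pi.single_apply]

theorem applyRule_hamRule_star (A B Y : V) (i j : ℕ) (C : Config (Sp V)) :
    applyRule (hamRule A B i) C (star Y j) =
      C (star Y j) + (if Y = B ∧ j = i + 1 then 1 else 0) -
        (if Y = A ∧ j = i then 1 else 0) := by
  rw [applyRule, hamRule_fst_star]
  congr 2
  simp [hamRule, _root_.star, vis, Pi.single_apply]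

def StarsAt (C : Config (Sp V)) (X : V) (n : ℕ) : Prop :=
  ∀ Y j, C (star Y j) = if Y = X ∧ j = n then 1 else 0

theorem starsAt_hamI (s : V) : StarsAt (hamI s) s 0 := by
  intro Y j
  simp [hamI, _root_.star]

/-- The only starred molecule present, `X*_n`, must be the one a rule consumes. -/
theorem StarsAt.step [Fintype V] {E : V → V → Prop} {C C' : Config (Sp V)} {X : V} {n : ℕ}
    (hC : StarsAt C X n) (hstep : Step (hamRules E) C C') : ∃ B, StarsAt C' B (n + 1) := by
  obtain ⟨R, hR, happ, rfl⟩ := hstep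
  obtain ⟨A, B, i, -, -, rfl⟩ := mem_hamRules.1 hR
  have hconsumed := happ (star A i)
  rw [hamRule_fst_star, hC] at hconsumed
  obtain ⟨rfl, rfl⟩ : A = X ∧ i = n := by
    by_contra h
    simp [h] at hconsumed
  refine ⟨B, fun Y j => ?_⟩
  rw [applyRule_hamRule_star, hC]
  split_ifs <;> omega

theorem StepsN.starsAt [Fintype V] {E : V → V → Prop} {n : ℕ} {C₀ C : Config (Sp V)} {X₀ : V}
    (h : StepsN (hamRules E) n C₀ C) (h₀ : StarsAt C₀ X₀ 0) : ∃ X, StarsAt C X n := by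
  induction h with
  | refl => exact ⟨X₀, h₀⟩
  | tail _ hstep ih =>
    obtain ⟨X, hX⟩ := ih h₀
    exact hX.step hstep

end HamRule

/-- in the Hamiltonian-path construction, every configuration reachable
from the initial configuration by `n` rule applications contains exactly one copy of
exactly one starred species, whose index equals `n`; moreover the count of each visited
species `X^v` never decreases in any step. -/
theorem stmt17 {V : Type*} [Fintype V] [DecidableEq V] (E : V → V → Prop) (s : V) :
    (∀ (n : ℕ) (C : Config (Sp V)), StepsN (hamRules E) n (hamI s) C →
      ∃ X : V, C (star X n) = 1 ∧
        ∀ (Y : V) (j : ℕ), ¬(Y = X ∧ j = n) → C (star Y j) = 0) ∧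
    (∀ C C' : Config (Sp V), Step (hamRules E) C C' →
      ∀ X : V, C (vis X) ≤ C' (vis X)) := by
  refine ⟨fun n C hC => ?_, fun C C' hstep X => ?_⟩
  · obtain ⟨X, hX⟩ := hC.starsAt (starsAt_hamI s)
    refine ⟨X, by simpa using hX X n, fun Y j hYj => ?_⟩
    rw [hX, if_neg hYj]
  · obtain ⟨R, hR, -, rfl⟩ := hstep
    obtain ⟨A, B, i, -, -, rfl⟩ := mem_hamRules.1 hR
    exact le_applyRule_of_fst_eq_zero (hamRule_fst_vis A B X i) C
end
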